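/- arXiv:2408.14116 — 2 statements merged into one kernel-verified Lean document; each statement's English description precedes it below -/
import Mathlib

section
/- Let R_E > 0 be the Earth's radius, with the Earth's center at the origin. For two points p, q ∈ ℝ³ with ‖p‖ = ‖q‖ = r > R_E and ‖p − q‖ ≤ 2√(r² − R_E²), every point on the segment [p,q] has norm at least R_E. -/
/-- Two satellites `p, q ∈ ℝ³` at distance `r > R_E` from the Earth's center, with
`‖p − q‖ ≤ 2√(r² − R_E²)`, have a connecting segment that avoids the open ball of
radius `R_E`: every point `(1−t)p + tq`, `t ∈ [0,1]`, has norm at least `R_E`. -/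
theorem isl_segment_clears_earth (RE r : ℝ) (hRE : 0 < RE) (hr : RE < r)
    (p q : EuclideanSpace ℝ (Fin 3)) (hp : ‖p‖ = r) (hq : ‖q‖ = r)
    (hd : ‖p - q‖ ≤ 2 * Real.sqrt (r ^ 2 - RE ^ 2)) :
    ∀ t ∈ Set.Icc (0:ℝ) 1, RE ≤ ‖(1 - t) • p + t • q‖ := by
  intro t ht
  obtain ⟨ht0, ht1⟩ := ht
  have hx : (0:ℝ) ≤ r ^ 2 - RE ^ 2 := by nlinarith
  have hs := Real.sq_sqrt hx
  have hd2 : ‖p - q‖ ^ 2 ≤ 4 * (r ^ 2 - RE ^ 2) := by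
    nlinarith [norm_nonneg (p - q), Real.sqrt_nonneg (r ^ 2 - RE ^ 2)]
  have h1 : ‖p - q‖ ^ 2 = ‖p‖ ^ 2 - 2 * (inner ℝ p q : ℝ) + ‖q‖ ^ 2 := by
    rw [@norm_sub_sq_real]
  have hip : (2 * RE ^ 2 - r ^ 2 : ℝ) ≤ (inner ℝ p q : ℝ) := by nlinarith
  have hnorm : ‖(1 - t) • p + t • q‖ ^ 2
      = (1 - t) ^ 2 * r ^ 2 + 2 * ((1 - t) * t) * (inner ℝ p q : ℝ) + t ^ 2 * r ^ 2 := by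
    rw [@norm_add_sq_real, norm_smul, norm_smul, real_inner_smul_left,
      real_inner_smul_right, hp, hq, Real.norm_eq_abs, Real.norm_eq_abs,
      abs_of_nonneg (by linarith : (0:ℝ) ≤ 1 - t), abs_of_nonneg ht0]
    ring
  nlinarith [norm_nonneg ((1 - t) • p + t • q), hnorm, mul_nonneg (mul_nonneg (by linarith : (0:ℝ) ≤ 1 - t) ht0) (sub_nonneg.2 hip), mul_nonneg (sq_nonneg (1-2*t)) hx, sq_nonneg (1-2*t)]
end

section
/- In the Chu–Liu–Edmonds cycle contraction step, the weight of any arborescence in the contracted graph G' (with adjusted weights w'_{i,v_C} = w_{ij} − w_{π(j),j} for edges entering the cycle C) differs from the weight of the corresponding expanded arborescence in G by the constant Σ_{j∈C} w_{π(j),j} minus one term w_{π(j*),j*}; in particular, a minimum spanning arborescence of G' expands to a minimum spanning arborescence of G. -/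
/-- Chu–Liu–Edmonds contraction accounting: with contracted weights
`w'(i,j) = w(i,j) − w(π j, j)` for edges entering the cycle `C` (and unchanged
otherwise), the weight in `G` of the expansion of a contracted arborescence `A'`
(entering `C` at `j*`, keeping the cycle edges except `(π j*, j*)`) equals the
contracted weight of `A'` plus the constant `Σ_{j∈C} w(π j, j)`. In particular,
comparing two contracted arborescences by contracted weight is equivalent to comparing
their expansions by original weight, so a minimum spanning arborescence of the
contracted graph expands to a minimum one of `G`. -/
theorem chu_liu_edmonds_contraction {V : Type*} [Fintype V] [DecidableEq V]
    (w w' : V × V → ℝ) (C : Finset V) (π : V → V) (r : V) (hr : r ∉ C)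
    (hπC : ∀ j ∈ C, π j ∈ C)
    (hw'in : ∀ i j : V, i ∉ C → j ∈ C → w' (i, j) = w (i, j) - w (π j, j))
    (hw'out : ∀ i j : V, j ∉ C → w' (i, j) = w (i, j)) :
    (∀ (A' : Finset (V × V)) (i jstar : V), i ∉ C → jstar ∈ C →
      (i, jstar) ∈ A' →
      (∀ e ∈ A', e.1 ∉ C) →
      (∀ e ∈ A', e.2 ∈ C → e = (i, jstar)) →
      ∑ e ∈ A' ∪ (C.erase jstar).image (fun j => ((π j, j) : V × V)), w e
        = (∑ e ∈ A', w' e) + ∑ j ∈ C, w (π j, j)) ∧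
    (∀ (A₁ A₂ : Finset (V × V)) (i₁ j₁ i₂ j₂ : V),
      i₁ ∉ C → j₁ ∈ C → (i₁, j₁) ∈ A₁ → (∀ e ∈ A₁, e.1 ∉ C) →
      (∀ e ∈ A₁, e.2 ∈ C → e = (i₁, j₁)) →
      i₂ ∉ C → j₂ ∈ C → (i₂, j₂) ∈ A₂ → (∀ e ∈ A₂, e.1 ∉ C) →
      (∀ e ∈ A₂, e.2 ∈ C → e = (i₂, j₂)) →
      ((∑ e ∈ A₁, w' e ≤ ∑ e ∈ A₂, w' e) ↔
        (∑ e ∈ A₁ ∪ (C.erase j₁).image (fun j => ((π j, j) : V × V)), w e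
          ≤ ∑ e ∈ A₂ ∪ (C.erase j₂).image (fun j => ((π j, j) : V × V)), w e))) := by

  have key : ∀ (A' : Finset (V × V)) (i jstar : V), i ∉ C → jstar ∈ C →
      (i, jstar) ∈ A' →
      (∀ e ∈ A', e.1 ∉ C) →
      (∀ e ∈ A', e.2 ∈ C → e = (i, jstar)) →
      ∑ e ∈ A' ∪ (C.erase jstar).image (fun j => ((π j, j) : V × V)), w e
        = (∑ e ∈ A', w' e) + ∑ j ∈ C, w (π j, j) := by
    intro A' i jstar hi hj hmem htail hhead
    have hdisj : Disjoint A' ((C.erase jstar).image (fun j => ((π j, j) : V × V))) := by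
      rw [Finset.disjoint_right]
      rintro ⟨a, b⟩ hb ha
      simp only [Finset.mem_image] at hb
      obtain ⟨j, hjmem, hje⟩ := hb
      rw [← hje] at ha
      exact htail _ ha (hπC j (Finset.mem_of_mem_erase hjmem))
    have hinj : ∀ x ∈ C.erase jstar, ∀ y ∈ C.erase jstar,
        (fun j => ((π j, j) : V × V)) x = (fun j => ((π j, j) : V × V)) y → x = y := by
      intro x _ y _ h
      exact (Prod.mk.injEq _ _ _ _).mp h |>.2
    rw [Finset.sum_union hdisj, Finset.sum_image hinj]
    have h1 : ∑ e ∈ A', w e = w (i, jstar) + ∑ e ∈ A'.erase (i, jstar), w e :=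
      (Finset.add_sum_erase _ _ hmem).symm
    have h2 : ∑ e ∈ A', w' e = w' (i, jstar) + ∑ e ∈ A'.erase (i, jstar), w' e :=
      (Finset.add_sum_erase _ _ hmem).symm
    have h3 : ∑ e ∈ A'.erase (i, jstar), w' e = ∑ e ∈ A'.erase (i, jstar), w e := by
      refine Finset.sum_congr rfl ?_
      rintro ⟨a, b⟩ he
      have hA : (a, b) ∈ A' := Finset.mem_of_mem_erase he
      have hbC : b ∉ C := by
        intro hbC
        exact (Finset.ne_of_mem_erase he) (hhead _ hA hbC)
      exact hw'out a b hbC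
    have h4 : ∑ j ∈ C, w (π j, j)
        = w (π jstar, jstar) + ∑ j ∈ C.erase jstar, w (π j, j) :=
      (Finset.add_sum_erase _ _ hj).symm
    have h5 : w' (i, jstar) = w (i, jstar) - w (π jstar, jstar) := hw'in i jstar hi hj
    linarith
  refine ⟨key, ?_⟩
  intro A₁ A₂ i₁ j₁ i₂ j₂ hi₁ hj₁ hm₁ ht₁ hh₁ hi₂ hj₂ hm₂ ht₂ hh₂
  rw [key A₁ i₁ j₁ hi₁ hj₁ hm₁ ht₁ hh₁, key A₂ i₂ j₂ hi₂ hj₂ hm₂ ht₂ hh₂]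
  constructor <;> intro h <;> linarith
end
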